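/- arXiv:math/0702420 — 3 statements merged into one kernel-verified Lean document; each statement's English description precedes it below -/
import Mathlib

section
/- Let A be a self-adjoint operator on a Hilbert space H and let a < b be reals such that the open interval (a,b) contains no point of the spectrum of A. Then for every z in the open disk D(a,b) with diameter [a,b] and every unit vector u in the domain of A, the inner product ⟨(A - z)u, (A - z̄)u⟩ is nonzero. In particular, for any finite-dimensional subspace L ⊆ Dom(A) with basis e₁, …, eₙ, the matrix P_L(z) with entries [P_L(z)]_{jk} = ⟨A e_j, A e_k⟩ - 2z ⟨A e_j, e_k⟩ + z² ⟨e_j, e_k⟩ is nonsingular. -/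
open Polynomial ComplexOrder in
lemma aux_pos {H : Type*} [NormedAddCommGroup H] [InnerProductSpace ℂ H] [CompleteSpace H]
    [Nontrivial H]
    (A : H →L[ℂ] H) (hA : IsSelfAdjoint A) (a b : ℝ)
    (hab : a ≤ b)
    (hgap : ∀ x : ℝ, x ∈ Set.Ioo a b → (x : ℂ) ∉ spectrum ℂ A) (u : H) :
    0 ≤ (inner ℂ (A u) (A u) : ℂ).re - (a+b) * (inner ℂ (A u) u : ℂ).re
      + a*b * (inner ℂ u u : ℂ).re := by
  set p : ℂ[X] := (X - C (a:ℂ)) * (X - C (b:ℂ)) with hp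
  set T : H →L[ℂ] H := aeval A p with hT
  have hTeq : T = (A - algebraMap ℂ _ (a:ℂ)) * (A - algebraMap ℂ _ (b:ℂ)) := by
    simp [hT, hp, map_mul, map_sub, aeval_X, aeval_C]
  have hsa : ∀ r : ℝ, IsSelfAdjoint (algebraMap ℂ (H →L[ℂ] H) (r:ℂ)) := by
    intro r
    rw [IsSelfAdjoint, ← algebraMap_star_comm]
    norm_num
  have hTsa : IsSelfAdjoint T := by
    rw [hTeq, IsSelfAdjoint, star_mul, (hA.sub (hsa a)).star_eq, (hA.sub (hsa b)).star_eq]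
    have c1 : Commute A (A - algebraMap ℂ (H →L[ℂ] H) (a:ℂ)) :=
      (Commute.refl A).sub_right (Algebra.commutes _ _).symm
    have d0 : Commute (algebraMap ℂ (H →L[ℂ] H) (b:ℂ)) A := Algebra.commutes _ _
    have d0' : Commute (algebraMap ℂ (H →L[ℂ] H) (b:ℂ)) (algebraMap ℂ (H →L[ℂ] H) (a:ℂ)) :=
      Algebra.commutes _ _
    have d1 : Commute (algebraMap ℂ (H →L[ℂ] H) (b:ℂ)) (A - algebraMap ℂ (H →L[ℂ] H) (a:ℂ)) :=
      d0.sub_right d0'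
    exact (c1.sub_left d1).eq
  have hspec : spectrum ℂ T = (fun ζ => eval ζ p) '' spectrum ℂ A := by
    rw [hT]; exact spectrum.map_polynomial_aeval A p
  have hTnn : (0:H →L[ℂ] H) ≤ T := by
    rw [StarOrderedRing.nonneg_iff_spectrum_nonneg (R := ℂ) T]
    intro x hx
    rw [hspec] at hx
    obtain ⟨μ, hμ, rfl⟩ := hx
    have hμre : μ = (μ.re : ℂ) := hA.mem_spectrum_eq_re hμ
    have hnot : μ.re ∉ Set.Ioo a b := fun h => hgap μ.re h (hμre ▸ hμ)
    have hnn : (0:ℝ) ≤ (μ.re - a) * (μ.re - b) := by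
      rcases le_or_gt μ.re a with h | h
      · nlinarith [hab]
      · have hb : b ≤ μ.re := by
          by_contra hb
          exact hnot ⟨h, lt_of_not_ge hb⟩
        nlinarith
    rw [hμre]
    simp only [hp, eval_mul, eval_sub, eval_X, eval_C]
    rw [← Complex.ofReal_sub, ← Complex.ofReal_sub, ← Complex.ofReal_mul]
    exact_mod_cast hnn
  have hTpos := (ContinuousLinearMap.nonneg_iff_isPositive T).mp hTnn
  have hkey := hTpos.inner_nonneg_left u
  have hsym := hA.isSymmetric
  have hTu : T u = A (A u) - (b:ℂ) • A u - (a:ℂ) • A u + ((a:ℂ)*(b:ℂ)) • u := by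
    rw [hTeq]
    simp only [ContinuousLinearMap.mul_apply, ContinuousLinearMap.sub_apply,
      Algebra.algebraMap_eq_smul_one, ContinuousLinearMap.smul_apply,
      ContinuousLinearMap.one_apply, map_sub, map_smul, smul_sub, smul_smul]
    module
  have h1 : (inner ℂ (T u) u : ℂ) = inner ℂ (A u) (A u) - ((a:ℂ)+(b:ℂ)) * inner ℂ (A u) u
      + ((a:ℂ)*(b:ℂ)) * inner ℂ u u := by
    have hs : (inner ℂ (A (A u)) u : ℂ) = inner ℂ (A u) (A u) := hsym (A u) u
    rw [hTu]
    simp only [inner_sub_left, inner_add_left, inner_smul_left, hs,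
      map_mul, Complex.conj_ofReal]
    ring
  have him : (inner ℂ (A u) u : ℂ).im = 0 :=
    Complex.conj_eq_iff_im.mp
      ((LinearMap.isSymmetric_iff_inner_map_self_real _).mp hsym u)
  rw [h1] at hkey
  replace hkey := (Complex.le_def.mp hkey).1
  simp only [RCLike.re_to_complex, Complex.add_re, Complex.sub_re, Complex.mul_re,
    Complex.ofReal_re, Complex.ofReal_im, Complex.add_im, him, mul_zero, sub_zero,
    ← Complex.ofReal_mul, zero_mul] at hkey
  convert hkey using 1
  try push_cast
  try ring
  try rfl

lemma aux_key {H : Type*} [NormedAddCommGroup H] [InnerProductSpace ℂ H] [CompleteSpace H]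
    (A : H →L[ℂ] H) (hA : IsSelfAdjoint A) (a b : ℝ) (hab : a < b)
    (hgap : ∀ x : ℝ, x ∈ Set.Ioo a b → (x : ℂ) ∉ spectrum ℂ A)
    (z : ℂ) (hz : ‖z - (((a : ℂ) + (b : ℂ)) / 2)‖ < (b - a) / 2)
    (u : H) (hu : ‖u‖ = 1) :
    (inner ℂ (A u - z • u) (A u - (starRingEnd ℂ z) • u) : ℂ) ≠ 0 := by
  intro hE
  have hune : u ≠ 0 := by intro h; rw [h] at hu; simp at hu
  haveI : Nontrivial H := ⟨⟨u, 0, hune⟩⟩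
  have hsym := hA.isSymmetric
  have huu : (inner ℂ u u : ℂ) = 1 := by
    rw [inner_self_eq_norm_sq_to_K, hu]; norm_num
  have him : (inner ℂ (A u) u : ℂ).im = 0 :=
    Complex.conj_eq_iff_im.mp
      ((LinearMap.isSymmetric_iff_inner_map_self_real _).mp hsym u)
  set m1 : ℝ := (inner ℂ (A u) u : ℂ).re with hm1def
  have hm1 : (inner ℂ (A u) u : ℂ) = (m1:ℂ) := by
    apply Complex.ext
    · simp [hm1def]
    · simp [him]
  have hm1' : (inner ℂ u (A u) : ℂ) = (m1:ℂ) := by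
    rw [show (inner ℂ u (A u) : ℂ) = inner ℂ (A u) u from (hsym u u).symm]; exact hm1
  have hM2im : (inner ℂ (A u) (A u) : ℂ).im = 0 := by
    rw [inner_self_eq_norm_sq_to_K]
    norm_num [pow_two, Complex.mul_im]
  set m2 : ℝ := (inner ℂ (A u) (A u) : ℂ).re with hm2def
  have hM2 : (inner ℂ (A u) (A u) : ℂ) = (m2:ℂ) := by
    apply Complex.ext
    · simp [hm2def]
    · rw [hM2im]; simp
  set w : ℂ := (starRingEnd ℂ) z with hw
  have hE' : (m2:ℂ) - 2*(m1:ℂ)*w + w^2 = 0 := by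
    rw [← hE]
    simp only [inner_sub_left, inner_sub_right, inner_smul_left, inner_smul_right,
      hm1, hm1', huu, hM2, ← hw]
    ring
  set s : ℝ := z.re with hs
  set t : ℝ := z.im with ht
  have hwre : w.re = s := by simp [hw, hs]
  have hwim : w.im = -t := by simp [hw, ht]
  have hRe : m2 - 2*m1*s + (s^2 - t^2) = 0 := by
    have h1 := congrArg Complex.re hE'
    simpa [Complex.sub_re, Complex.add_re, Complex.mul_re, Complex.mul_im, pow_two,
      hwre, hwim] using h1
  have hIm : 2*t*(m1 - s) = 0 := by
    have h2 := congrArg Complex.im hE'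
    simp [Complex.sub_im, Complex.add_im, Complex.mul_re, Complex.mul_im, pow_two,
      hwre, hwim] at h2
    linarith
  have hc : (((a:ℂ)+(b:ℂ))/2) = (((a+b)/2 : ℝ) : ℂ) := by push_cast; ring
  have hdisk : (s - (a+b)/2)^2 + t^2 < ((b-a)/2)^2 := by
    rw [hc] at hz
    have h0 := norm_nonneg (z - (((a+b)/2 : ℝ) : ℂ))
    have e1 : ‖z - (((a+b)/2 : ℝ) : ℂ)‖ ^ 2 = (s - (a+b)/2)^2 + t^2 := by
      rw [Complex.sq_norm, Complex.normSq_apply]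
      simp [Complex.sub_re, Complex.sub_im, hs, ht]
      ring
    nlinarith [hz, h0, e1]
  have hpos := aux_pos A hA a b hab.le hgap u
  rw [← hm2def, ← hm1def, huu] at hpos
  simp only [Complex.one_re, mul_one] at hpos
  by_cases ht0 : t = 0
  · have hz0 : z = (s:ℂ) := Complex.ext rfl ht0
    have hzero : (inner ℂ (A u - (s:ℂ)•u) (A u - (s:ℂ)•u) : ℂ) = 0 := by
      simp only [inner_sub_left, inner_sub_right, inner_smul_left, inner_smul_right,
        hm1, hm1', huu, hM2, Complex.conj_ofReal]
      have : ((m2 - 2*m1*s + s^2 : ℝ) : ℂ) = 0 := by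
        rw [show m2 - 2*m1*s + s^2 = 0 by rw [ht0] at hRe; linarith]
        simp
      push_cast at this ⊢
      linear_combination this
    have hAu : A u = (s:ℂ) • u := by
      rwa [inner_self_eq_zero, sub_eq_zero] at hzero
    have hsIoo : s ∈ Set.Ioo a b := by
      rw [ht0] at hdisk
      constructor <;> nlinarith [hdisk]
    refine hgap s hsIoo ?_
    rw [spectrum.mem_iff]
    intro hunit
    obtain ⟨v, hv⟩ := hunit
    have happ : (v : H →L[ℂ] H) u = 0 := by
      rw [hv]
      simp [Algebra.algebraMap_eq_smul_one, ContinuousLinearMap.sub_apply, hAu]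
    have hvu : (↑v⁻¹ * ↑v : H →L[ℂ] H) u = u := by
      rw [v.inv_mul]; rfl
    rw [ContinuousLinearMap.mul_apply, happ, map_zero] at hvu
    exact hune hvu.symm
  · have hm1s : m1 = s := by
      rcases mul_eq_zero.mp hIm with h | h
      · exact absurd (by linarith : t = 0) ht0
      · linarith
    rw [hm1s] at hRe hpos
    nlinarith [hRe, hpos, hdisk]



/-- Non-pollution theorem for the quadratic projection method: if `(a,b)` misses the spectrum
of the self-adjoint operator `A` and `z` lies in the open disk with diameter `[a,b]`, then
`⟨(A - z)u, (A - z̄)u⟩ ≠ 0` for every unit vector `u`; in particular the quadratic matrix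
polynomial `P_L(z)` built from any basis of a finite-dimensional subspace is nonsingular. -/
theorem stmt2 {H : Type*} [NormedAddCommGroup H] [InnerProductSpace ℂ H] [CompleteSpace H]
    (A : H →L[ℂ] H) (hA : IsSelfAdjoint A) (a b : ℝ) (hab : a < b)
    (hgap : ∀ x : ℝ, x ∈ Set.Ioo a b → (x : ℂ) ∉ spectrum ℂ A)
    (z : ℂ) (hz : ‖z - (((a : ℂ) + (b : ℂ)) / 2)‖ < (b - a) / 2) :
    (∀ u : H, ‖u‖ = 1 →
      (inner ℂ (A u - z • u) (A u - (starRingEnd ℂ z) • u) : ℂ) ≠ 0) ∧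
    (∀ (n : ℕ) (e : Fin n → H), LinearIndependent ℂ e →
      IsUnit (Matrix.det (Matrix.of fun j k : Fin n =>
        (inner ℂ (A (e j)) (A (e k)) : ℂ) - 2 * z * (inner ℂ (A (e j)) (e k) : ℂ)
          + z ^ 2 * (inner ℂ (e j) (e k) : ℂ)))) := by
  refine ⟨fun u hu => aux_key A hA a b hab hgap z hz u hu, ?_⟩
  intro n e he
  set M : Matrix (Fin n) (Fin n) ℂ := Matrix.of fun j k =>
    (inner ℂ (A (e j)) (A (e k)) : ℂ) - 2 * z * (inner ℂ (A (e j)) (e k) : ℂ)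
      + z ^ 2 * (inner ℂ (e j) (e k) : ℂ) with hM
  rw [isUnit_iff_ne_zero]
  intro hdet
  obtain ⟨c, hc0, hMc⟩ := Matrix.exists_mulVec_eq_zero_iff.mpr hdet
  set w : ℂ := (starRingEnd ℂ) z with hw
  have hsym := hA.isSymmetric
  set v : H := ∑ k, c k • e k with hv
  have hvne : v ≠ 0 := by
    intro h
    apply hc0
    funext i
    exact (Fintype.linearIndependent_iff.mp he) c (by rw [← hv]; exact h) i
  have hMentry : ∀ j k, M j k = inner ℂ (A (e j) - w • e j) (A (e k) - z • e k) := by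
    intro j k
    have h1 : (inner ℂ (e j) (A (e k)) : ℂ) = inner ℂ (A (e j)) (e k) :=
      (hsym (e j) (e k)).symm
    simp only [inner_sub_left, inner_sub_right, inner_smul_left, inner_smul_right, h1,
      hM, Matrix.of_apply, hw, Complex.conj_conj]
    ring
  have hAv : A v - z • v = ∑ k, c k • (A (e k) - z • e k) := by
    simp only [hv, map_sum, map_smul, Finset.smul_sum, smul_sub, smul_smul, smul_comm z]
    rw [← Finset.sum_sub_distrib]
  have hAvw : A v - w • v = ∑ k, c k • (A (e k) - w • e k) := by
    simp only [hv, map_sum, map_smul, Finset.smul_sum, smul_sub, smul_smul, smul_comm w]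
    rw [← Finset.sum_sub_distrib]
  have hj : ∀ j, (inner ℂ (A (e j) - w • e j) (A v - z • v) : ℂ) = 0 := by
    intro j
    rw [hAv, inner_sum]
    simp_rw [inner_smul_right, ← hMentry]
    have hmc := congrFun hMc j
    rw [Matrix.mulVec, dotProduct] at hmc
    simp only [Pi.zero_apply] at hmc
    rw [← hmc]
    exact Finset.sum_congr rfl fun k _ => mul_comm _ _
  have hfull : (inner ℂ (A v - w • v) (A v - z • v) : ℂ) = 0 := by
    rw [hAvw, sum_inner]
    simp [inner_smul_left, hj]
  have hnv : ‖v‖ ≠ 0 := norm_ne_zero_iff.mpr hvne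
  set u : H := ((‖v‖:ℂ)⁻¹) • v with hu
  have hun : ‖u‖ = 1 := by
    rw [hu, norm_smul]
    simp [inv_mul_cancel₀ hnv]
  apply aux_key A hA a b hab hgap z hz u hun
  have h1 : A u - z • u = ((‖v‖:ℂ)⁻¹) • (A v - z • v) := by
    rw [hu, map_smul, smul_sub, smul_comm]
  have h2 : A u - w • u = ((‖v‖:ℂ)⁻¹) • (A v - w • v) := by
    rw [hu, map_smul, smul_sub, smul_comm]
  rw [show (starRingEnd ℂ z) = w from rfl, h1, h2, inner_smul_left, inner_smul_right]
  have hconj : (inner ℂ (A v - z • v) (A v - w • v) : ℂ) = 0 := by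
    rw [← inner_conj_symm, hfull, map_zero]
  rw [hconj, mul_zero, mul_zero]
end

section
/- Let A be a self-adjoint operator, L a finite-dimensional subspace of Dom(A), and μ a complex number such that P_L(μ)u = 0 for some nonzero u ∈ L (i.e., μ is in the second-order spectrum of A relative to L). Then the distance from Re(μ) to the spectrum of A is at most |Im(μ)|: inf{|Re μ - λ| : λ ∈ Spec(A)} ≤ |Im μ|. -/
open scoped ComplexInnerProductSpace ComplexConjugate InnerProductSpace Matrix

/-!
With `w = ∑ k, u k • e k`, the hypothesis says `⟪(A - conj μ) w, (A - μ) w⟫ = 0`, and by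
polarization the real part of this is `‖(A - Re μ) w‖² - (Im μ)² ‖w‖²`. On the other hand, for
self-adjoint `A` and real `a` the continuous functional calculus gives
`(A - a)² ≥ dist(a, σ(A))²`, hence `‖(A - a) w‖ ≥ dist(a, σ(A)) ‖w‖`.
-/

theorem star_dotProduct_of_inner_mulVec {𝕜 E ι : Type*} [RCLike 𝕜] [NormedAddCommGroup E]
    [InnerProductSpace 𝕜 E] [Fintype ι] (v v' : ι → E) (x y : ι → 𝕜) :
    star x ⬝ᵥ (Matrix.of fun i j => ⟪v i, v' j⟫_𝕜) *ᵥ y = ⟪∑ i, x i • v i, ∑ j, y j • v' j⟫_𝕜 := by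
  simp_rw [dotProduct, Matrix.mulVec, dotProduct, Matrix.of_apply, Finset.mul_sum, sum_inner,
    inner_sum, inner_smul_left, inner_smul_right, Pi.star_apply, RCLike.star_def]
  exact Finset.sum_congr rfl fun i _ => Finset.sum_congr rfl fun j _ => by ring

section

variable {H : Type*} [NormedAddCommGroup H] [InnerProductSpace ℂ H]

theorem re_inner_sub_conj_smul_sub_smul (y w : H) (z : ℂ) :
    (⟪y - conj z • w, y - z • w⟫).re = ‖y - (z.re : ℂ) • w‖ ^ 2 - z.im ^ 2 * ‖w‖ ^ 2 := by
  have hadd : y - conj z • w + (y - z • w) = (2 : ℂ) • (y - (z.re : ℂ) • w) := by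
    linear_combination (norm := module) (Complex.add_conj z).symm • w
  have hsub : y - conj z • w - (y - z • w) = (2 * z.im * Complex.I) • w := by
    linear_combination (norm := module) (Complex.sub_conj z) • w
  rw [← RCLike.re_to_complex, re_inner_eq_norm_add_mul_self_sub_norm_sub_mul_self_div_four, hadd,
    hsub, norm_smul, norm_smul]
  simp only [Complex.norm_ofNat, Complex.norm_mul, Complex.norm_real, Real.norm_eq_abs,
    Complex.norm_I, mul_one]
  rw [← sq_abs z.im]
  ring

theorem IsSelfAdjoint.inner_sub_conj_smul_sub_smul [CompleteSpace H] {A : H →L[ℂ] H}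
    (hA : IsSelfAdjoint A) (μ : ℂ) (x y : H) :
    ⟪A x - conj μ • x, A y - μ • y⟫ = ⟪A x, A y⟫ - 2 * μ * ⟪A x, y⟫ + μ ^ 2 * ⟪x, y⟫ := by
  have := hA.isSymmetric x y
  simp only [inner_sub_left, inner_sub_right, inner_smul_left, inner_smul_right,
    RCLike.conj_conj, ← ContinuousLinearMap.coe_coe, ← this]
  ring

theorem IsSelfAdjoint.mul_norm_sq_le_norm_apply_sq [CompleteSpace H] {T : H →L[ℂ] H}
    (hT : IsSelfAdjoint T) {c : ℝ} (hc : algebraMap ℝ (H →L[ℂ] H) c ≤ T ^ 2) (w : H) :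
    c * ‖w‖ ^ 2 ≤ ‖T w‖ ^ 2 := by
  have hpos := ((ContinuousLinearMap.le_def _ _).mp hc).re_inner_nonneg_right w
  have happly : (T ^ 2 - algebraMap ℝ (H →L[ℂ] H) c) w = T (T w) - c • w := by
    simp [pow_two, Algebra.algebraMap_eq_smul_one]
  have hTT : ⟪w, T (T w)⟫ = ⟪T w, T w⟫ := (hT.isSymmetric w (T w)).symm
  rw [happly, inner_sub_right, hTT, RCLike.real_smul_eq_coe_smul (K := ℂ), inner_smul_right,
    inner_self_eq_norm_sq_to_K, inner_self_eq_norm_sq_to_K] at hpos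
  simpa [← Complex.ofReal_pow, ← Complex.ofReal_mul] using hpos

theorem IsSelfAdjoint.algebraMap_infDist_sq_le [CompleteSpace H] {A : H →L[ℂ] H}
    (hA : IsSelfAdjoint A) (a : ℝ) :
    algebraMap ℝ (H →L[ℂ] H) (Metric.infDist (a : ℂ) (spectrum ℂ A) ^ 2)
      ≤ (A - algebraMap ℝ (H →L[ℂ] H) a) ^ 2 := by
  have hcfc : cfc (fun x : ℝ => (x - a) ^ 2) A = (A - algebraMap ℝ (H →L[ℂ] H) a) ^ 2 := by
    rw [cfc_pow (fun x : ℝ => x - a) 2 A, cfc_sub (fun x : ℝ => x) (fun _ : ℝ => a) A,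
      cfc_id' ℝ A, cfc_const a A]
  rw [← hcfc, ← cfc_const _ A]
  refine cfc_mono fun x hx => ?_
  have hx' : (x : ℂ) ∈ spectrum ℂ A := by
    simpa using (spectrum.algebraMap_mem_iff (R := ℝ) ℂ).mpr hx
  calc Metric.infDist (a : ℂ) (spectrum ℂ A) ^ 2 ≤ dist (a : ℂ) x ^ 2 :=
        pow_le_pow_left₀ Metric.infDist_nonneg (Metric.infDist_le_dist_of_mem hx') 2
    _ = (x - a) ^ 2 := by
        rw [Complex.dist_eq, ← Complex.ofReal_sub, Complex.norm_real, Real.norm_eq_abs, sq_abs]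
        ring

theorem IsSelfAdjoint.infDist_sq_mul_norm_sq_le [CompleteSpace H] {A : H →L[ℂ] H}
    (hA : IsSelfAdjoint A) (a : ℝ) (w : H) :
    Metric.infDist (a : ℂ) (spectrum ℂ A) ^ 2 * ‖w‖ ^ 2 ≤ ‖A w - (a : ℂ) • w‖ ^ 2 := by
  have hT : IsSelfAdjoint (A - algebraMap ℝ (H →L[ℂ] H) a) :=
    hA.sub (.algebraMap _ (star_trivial a))
  have hTw : (A - algebraMap ℝ (H →L[ℂ] H) a) w = A w - (a : ℂ) • w := by
    simp [Algebra.algebraMap_eq_smul_one]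
  simpa only [hTw] using hT.mul_norm_sq_le_norm_apply_sq (hA.algebraMap_infDist_sq_le a) w

end

/-- If `μ` belongs to the second-order spectrum of the self-adjoint operator `A` relative to a
finite-dimensional subspace (spanned by a linearly independent family `e`), then the distance
from `Re μ` to the spectrum of `A` is at most `|Im μ|`. -/
theorem stmt3 {H : Type*} [NormedAddCommGroup H] [InnerProductSpace ℂ H] [CompleteSpace H]
    (A : H →L[ℂ] H) (hA : IsSelfAdjoint A)
    (n : ℕ) (e : Fin n → H) (he : LinearIndependent ℂ e)
    (μ : ℂ) (u : Fin n → ℂ) (hu : u ≠ 0)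
    (hμ : (Matrix.of fun j k : Fin n =>
        (inner ℂ (A (e j)) (A (e k)) : ℂ) - 2 * μ * (inner ℂ (A (e j)) (e k) : ℂ)
          + μ ^ 2 * (inner ℂ (e j) (e k) : ℂ)).mulVec u = 0) :
    Metric.infDist ((μ.re : ℂ)) (spectrum ℂ A) ≤ |μ.im| := by
  set w := ∑ k, u k • e k
  have hw : w ≠ 0 := fun h => hu (funext (Fintype.linearIndependent_iff.mp he u h))
  have hquad : ⟪A w - conj μ • w, A w - μ • w⟫ = 0 := by
    have := star_dotProduct_of_inner_mulVec (fun j => A (e j) - conj μ • e j)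
      (fun k => A (e k) - μ • e k) u u
    simp_rw [hA.inner_sub_conj_smul_sub_smul, hμ, dotProduct_zero, smul_sub,
      Finset.sum_sub_distrib, smul_comm _ (conj μ), smul_comm _ μ, ← Finset.smul_sum, ← map_smul,
      ← map_sum] at this
    exact this.symm
  have hnorm : ‖A w - (μ.re : ℂ) • w‖ ^ 2 = μ.im ^ 2 * ‖w‖ ^ 2 := by
    have := re_inner_sub_conj_smul_sub_smul (A w) w μ
    rw [hquad, Complex.zero_re] at this
    linarith
  have hsq : Metric.infDist (μ.re : ℂ) (spectrum ℂ A) ^ 2 ≤ μ.im ^ 2 :=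
    le_of_mul_le_mul_right ((hA.infDist_sq_mul_norm_sq_le μ.re w).trans hnorm.le)
      (pow_pos (norm_pos_iff.mpr hw) 2)
  exact (le_abs_self _).trans (sq_le_sq.mp hsq)
end

section
/- Let A be a self-adjoint operator and L ⊆ Dom(A) a finite-dimensional subspace. If μ ∈ Spec(P_L) (the second-order spectrum) satisfies |μ − (a+b)/2| < (b−a)/2 for some reals a < b, then (a,b) ∩ Spec(A) ≠ ∅. -/
set_option maxHeartbeats 1600000

/-- Contrapositive of the non-pollution theorem: if `μ` lies in the second-order spectrum of
the self-adjoint operator `A` relative to a finite-dimensional subspace, and `μ` lies in the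
open disk with diametral interval `[a,b]`, then `Spec(A) ∩ (a,b) ≠ ∅`. -/
theorem stmt11 {H : Type*} [NormedAddCommGroup H] [InnerProductSpace ℂ H] [CompleteSpace H]
    (A : H →L[ℂ] H) (hA : IsSelfAdjoint A)
    (n : ℕ) (e : Fin n → H) (he : LinearIndependent ℂ e)
    (a b : ℝ) (hab : a < b) (μ : ℂ) (u : Fin n → ℂ) (hu : u ≠ 0)
    (hμ : (Matrix.of fun j k : Fin n =>
        (inner ℂ (A (e j)) (A (e k)) : ℂ) - 2 * μ * (inner ℂ (A (e j)) (e k) : ℂ)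
          + μ ^ 2 * (inner ℂ (e j) (e k) : ℂ)).mulVec u = 0)
    (hdisk : ‖μ - (((a : ℂ) + (b : ℂ)) / 2)‖ < (b - a) / 2) :
    ∃ x ∈ Set.Ioo a b, (x : ℂ) ∈ spectrum ℂ A := by
  by_contra hcon
  push_neg at hcon
  set v : H := ∑ k, u k • e k with hv
  have hvne : v ≠ 0 := by
    intro h0
    have h1 : ∀ j, u j = 0 := Fintype.linearIndependent_iff.mp he u (by rw [← hv]; exact h0)
    exact hu (funext h1)
  have hsym := hA.isSymmetric
  have hsym' : ∀ x y : H, (inner ℂ (A x) y : ℂ) = inner ℂ x (A y) := fun x y => hsym x y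
  have hj : ∀ j, (inner ℂ (A (e j)) (A v) : ℂ) - 2*μ*(inner ℂ (A (e j)) v : ℂ)
      + μ^2 * (inner ℂ (e j) v : ℂ) = 0 := by
    intro j
    have h0 := congrFun hμ j
    simp only [Matrix.mulVec, dotProduct, Matrix.of_apply, Pi.zero_apply] at h0
    have hAv : A v = ∑ k, u k • A (e k) := by simp [hv]
    rw [hAv, hv]
    simp only [inner_sum, inner_smul_right, Finset.mul_sum]
    rw [← Finset.sum_sub_distrib, ← Finset.sum_add_distrib, ← h0]
    exact Finset.sum_congr rfl fun k _ => by ring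
  have key : (inner ℂ (A v) (A v) : ℂ) - 2*μ*(inner ℂ (A v) v : ℂ)
      + μ^2 * (inner ℂ v v : ℂ) = 0 := by
    have hAv : A v = ∑ j, u j • A (e j) := by simp [hv]
    nth_rewrite 1 [hAv]
    nth_rewrite 2 [hAv]
    nth_rewrite 3 [hv]
    simp only [sum_inner, inner_smul_left, Finset.mul_sum]
    rw [← Finset.sum_sub_distrib, ← Finset.sum_add_distrib]
    refine Finset.sum_eq_zero fun j _ => ?_
    linear_combination (starRingEnd ℂ) (u j) * hj j
  set M : ℝ := ‖v‖^2 with hM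
  set Q : ℝ := ‖A v‖^2 with hQ
  set p : ℂ := (inner ℂ (A v) v : ℂ) with hp
  set P : ℝ := p.re with hP
  have hpreal : p = (P : ℂ) := by
    have h1 : (starRingEnd ℂ) p = p := by
      rw [hp, inner_conj_symm]
      exact (hsym v v).symm
    rw [hP]
    exact (Complex.conj_eq_iff_re.mp h1).symm
  have hvv : (inner ℂ v v : ℂ) = (M : ℂ) := by
    rw [inner_self_eq_norm_sq_to_K, hM]; norm_cast
  have hQQ : (inner ℂ (A v) (A v) : ℂ) = (Q : ℂ) := by
    rw [inner_self_eq_norm_sq_to_K, hQ]; norm_cast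
  rw [hQQ, hvv, hpreal] at key
  simp only [Complex.ext_iff, Complex.add_re, Complex.add_im, Complex.sub_re, Complex.sub_im,
    Complex.mul_re, Complex.mul_im, Complex.ofReal_re, Complex.ofReal_im, Complex.zero_re,
    Complex.zero_im, pow_two] at key
  obtain ⟨hre, him⟩ := key
  -- clean up re/im equations
  simp only [Complex.re_ofNat, Complex.im_ofNat, mul_zero, zero_mul, sub_zero, zero_sub,
    add_zero, zero_add, neg_add_eq_zero, neg_eq_zero] at hre him
  -- disk inequality in real form
  have hc2 : ((a:ℂ)+(b:ℂ))/2 = (((a+b)/2 : ℝ) : ℂ) := by push_cast; ring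
  rw [hc2] at hdisk
  have hd : (μ.re - (a+b)/2)*(μ.re - (a+b)/2) + μ.im*μ.im < ((b-a)/2)^2 := by
    have h0 : (0:ℝ) ≤ ‖μ - (((a+b)/2:ℝ):ℂ)‖ := norm_nonneg _
    have h1 : ‖μ - (((a+b)/2:ℝ):ℂ)‖^2 < ((b-a)/2)^2 := by nlinarith
    rw [Complex.sq_norm, Complex.normSq_apply] at h1
    simpa using h1
  have hMpos : 0 < M := by
    rw [hM]
    exact pow_pos (norm_pos_iff.mpr hvne) 2
  by_cases hy0 : μ.im = 0
  · -- real second-order spectral point: genuine eigenvalue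
    rw [hy0] at hre hd
    have hx1 : a < μ.re := by nlinarith
    have hx2 : μ.re < b := by nlinarith
    have h2 : (inner ℂ (A v) ((μ.re:ℂ) • v) : ℂ) = (μ.re:ℂ) * p := inner_smul_right _ _ _
    have h4 := norm_sub_sq (𝕜 := ℂ) (A v) ((μ.re:ℂ) • v)
    rw [h2, hpreal] at h4
    simp only [RCLike.re_to_complex, norm_smul, Complex.norm_real] at h4
    have h5 : ‖A v - (μ.re:ℂ) • v‖^2 = 0 := by
      rw [h4, ← hQ]
      have : Complex.re ((μ.re:ℂ) * (P:ℂ)) = μ.re * P := by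
        simp [Complex.mul_re]
      rw [this]
      have habs : ‖μ.re‖^2 = μ.re * μ.re := by
        rw [Real.norm_eq_abs, sq_abs]; ring
      rw [mul_pow, habs, ← hM]
      nlinarith [hre]
    have hAv : A v = (μ.re:ℂ) • v := by
      have := pow_eq_zero_iff (n := 2) (by norm_num) |>.mp h5
      rw [norm_eq_zero, sub_eq_zero] at this
      exact this
    have hmem : ((μ.re:ℝ):ℂ) ∈ spectrum ℂ A := by
      rw [spectrum.mem_iff]
      intro hunit
      obtain ⟨S, hS⟩ := hunit
      have h0 : (algebraMap ℂ (H →L[ℂ] H) μ.re - A) v = 0 := by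
        simp [Algebra.algebraMap_eq_smul_one, hAv]
      have h1 : v = 0 := by
        calc v = (1 : H →L[ℂ] H) v := rfl
          _ = ((↑S⁻¹ * ↑S : H →L[ℂ] H)) v := by rw [S.inv_mul]
          _ = (↑S⁻¹ : H →L[ℂ] H) ((↑S : H →L[ℂ] H) v) := rfl
          _ = 0 := by rw [hS, h0, map_zero]
      exact hvne h1
    exact hcon μ.re ⟨hx1, hx2⟩ hmem
  · -- nonreal case: use positivity of (A-a)(A-b)
    have hPxM : P = μ.re * M := by
      have h5 : μ.im * ((μ.re * M - P) * 2) = 0 := by linear_combination -him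
      rcases mul_eq_zero.mp h5 with h | h
      · exact absurd h hy0
      · linarith
    have hQxy : Q = (μ.re*μ.re + μ.im*μ.im) * M := by linear_combination hre + 2*μ.re*hPxM
    have hg : ∀ t ∈ spectrum ℝ A, 0 ≤ (fun t:ℝ => (t-a)*(t-b)) t := by
      intro t ht
      by_cases hta : t ∈ Set.Ioo a b
      · exact absurd (spectrum.algebraMap_mem ℂ ht)
          (by simpa [Complex.coe_algebraMap] using hcon t hta)
      · simp only [Set.mem_Ioo, not_and_or, not_lt] at hta
        show (0:ℝ) ≤ (t-a)*(t-b)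
        rcases hta with h | h
        · nlinarith
        · nlinarith
    have hpos : 0 ≤ cfc (fun t:ℝ => (t-a)*(t-b)) A := cfc_nonneg hg
    have hcfc : cfc (fun t:ℝ => (t-a)*(t-b)) A
        = (A - algebraMap ℝ _ a) * (A - algebraMap ℝ _ b) := by
      rw [cfc_mul _ _ A, cfc_sub _ _ A, cfc_sub _ _ A, cfc_id' ℝ A, cfc_const _ A, cfc_const _ A]
    rw [hcfc] at hpos
    have hSpos := (ContinuousLinearMap.nonneg_iff_isPositive _).mp hpos
    have h4 := hSpos.inner_nonneg_right v
    have hA' : ∀ (r : ℝ) (w : H), (A - algebraMap ℝ (H →L[ℂ] H) r) w = A w - (r:ℂ) • w := by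
      intro r w
      rw [ContinuousLinearMap.sub_apply, Algebra.algebraMap_eq_smul_one,
        ContinuousLinearMap.smul_apply, ContinuousLinearMap.one_apply,
        RCLike.real_smul_eq_coe_smul (K := ℂ)]
      rfl
    have hSv : ((A - algebraMap ℝ (H →L[ℂ] H) a) * (A - algebraMap ℝ (H →L[ℂ] H) b)) v
        = A (A v) - (b:ℂ) • A v - (a:ℂ) • A v + ((a:ℂ)*(b:ℂ)) • v := by
      rw [ContinuousLinearMap.mul_apply, hA', hA', map_sub, map_smul]
      module
    have h6 : (inner ℂ v (((A - algebraMap ℝ (H →L[ℂ] H) a) * (A - algebraMap ℝ (H →L[ℂ] H) b)) v) : ℂ)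
        = (Q:ℂ) - ((a:ℂ)+(b:ℂ))*(P:ℂ) + (a:ℂ)*(b:ℂ)*(M:ℂ) := by
      rw [hSv]
      simp only [inner_add_right, inner_sub_right, inner_smul_right]
      rw [← hsym' v (A v), hQQ]
      have hvAv : (inner ℂ v (A v) : ℂ) = (P:ℂ) := by
        rw [← inner_conj_symm, ← hp, hpreal, Complex.conj_ofReal]
      rw [hvAv, hvv]
      ring
    rw [h6] at h4
    have h7 : (0:ℝ) ≤ Q - (a+b)*P + a*b*M := by
      convert h4 using 1
      rw [show ((Q:ℂ) - ((a:ℂ)+(b:ℂ))*(P:ℂ) + (a:ℂ)*(b:ℂ)*(M:ℂ)) = ((Q - (a+b)*P + a*b*M : ℝ) : ℂ) by push_cast; ring, Complex.zero_le_real]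
    rw [hQxy, hPxM] at h7
    nlinarith [h7, mul_lt_mul_of_pos_right hd hMpos]
end
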